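/- arXiv:2006.03959 — 4 statements merged into one kernel-verified Lean document; each statement's English description precedes it below -/
import Mathlib

section
/- Let x and y be real-valued sub-Gaussian random variables with variance factor σ² > 0, i.e., E[exp(γx)] ≤ exp(γ²σ²/2) and E[exp(γy)] ≤ exp(γ²σ²/2) for all real γ. Then for all t > 0, P(|xy − E(xy)| ≥ 4σ²(√(8t) + t)) ≤ 2e^{−t}. -/
open MeasureTheory ProbabilityTheory Real Set
open scoped NNReal ENNReal

/-!
If `|xy| ≥ t` then `|x| ≥ √t` or `|y| ≥ √t`, so the product has exponential tails
`P(|xy| ≥ t) ≤ 4 exp(-t/(2σ²))`. Integrating these tails against `s (e^{st} - 1)` (layer cake)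
bounds `E[e^{s|xy|} - 1 - s|xy|]` by `32 s² σ⁴` for `s ≤ 1/(4σ²)`; since
`e^u ≤ 1 + u + (e^{|u|} - 1 - |u|)`, this makes `xy - E(xy)` sub-exponential in Bernstein's sense,
with variance proxy `v = 64 σ⁴` on the window `|λ| ≤ 1/b`, `b = 4σ²`. The Chernoff bound for such a
variable at `λ = 2t/(√(2vt) + 2bt)` controls each tail beyond `√(2vt) + bt = 4σ²(√(8t) + t)`
by `e^{-t}`.
-/

lemma exp_sub_one_sub_le_of_abs_le {u v : ℝ} (h : |u| ≤ v) :
    exp u - 1 - u ≤ exp v - 1 - v := by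
  have mono : ∀ {p q : ℝ}, 0 ≤ p → p ≤ q → exp p - 1 - p ≤ exp q - 1 - q := by
    intro p q hp hpq
    have hq : exp q = exp p * exp (q - p) := by rw [← exp_add, add_sub_cancel]
    nlinarith [one_le_exp hp, add_one_le_exp (q - p)]
  rcases le_total 0 u with hu | hu
  · exact mono hu ((le_abs_self u).trans h)
  · have reflect : exp u - 1 - u ≤ exp (-u) - 1 - (-u) := by
      have := self_le_sinh_iff.mpr (neg_nonneg.mpr hu)
      rw [sinh_eq, neg_neg] at this
      linarith
    exact reflect.trans (mono (neg_nonneg.mpr hu) (abs_of_nonpos hu ▸ h))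

lemma integral_mul_exp_mul_sub_one (s v : ℝ) :
    ∫ t in (0 : ℝ)..v, s * (exp (s * t) - 1) = exp (s * v) - 1 - s * v := by
  have hderiv : ∀ t : ℝ, HasDerivAt (fun t ↦ exp (s * t) - s * t) (s * (exp (s * t) - 1)) t := by
    intro t
    have hlin : HasDerivAt (fun t : ℝ ↦ s * t) s t := by
      simpa using (hasDerivAt_id t).const_mul s
    exact (hlin.exp.sub hlin).congr_deriv (by ring)
  rw [intervalIntegral.integral_eq_sub_of_hasDerivAt (fun t _ ↦ hderiv t)
    ((by fun_prop : Continuous fun t ↦ s * (exp (s * t) - 1)).intervalIntegrable 0 v)]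
  simp only [mul_zero, exp_zero, sub_zero]
  ring

lemma integral_Ioi_exp_neg_mul_mul_exp_sub_one {a s : ℝ} (ha : 0 < a) (hsa : s < a) :
    IntegrableOn (fun t ↦ exp (-a * t) * (s * (exp (s * t) - 1))) (Ioi 0) ∧
      ∫ t in Ioi 0, exp (-a * t) * (s * (exp (s * t) - 1)) = s ^ 2 / (a * (a - s)) := by
  have hsplit : (fun t ↦ exp (-a * t) * (s * (exp (s * t) - 1)))
      = fun t ↦ s * (exp ((s - a) * t) - exp (-a * t)) := by
    ext t; rw [show (s - a) * t = -a * t + s * t by ring, exp_add]; ring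
  have h₁ := integrableOn_exp_mul_Ioi (sub_neg.mpr hsa) 0
  have h₂ := integrableOn_exp_mul_Ioi (neg_neg_iff_pos.mpr ha) 0
  rw [hsplit]
  refine ⟨(h₁.sub h₂).const_mul s, ?_⟩
  rw [integral_const_mul, integral_sub h₁ h₂, integral_exp_mul_Ioi (sub_neg.mpr hsa),
    integral_exp_mul_Ioi (neg_neg_iff_pos.mpr ha)]
  simp only [mul_zero, exp_zero]
  rw [show s - a = -(a - s) by ring]
  field_simp [(sub_pos.mpr hsa).ne']
  ring

lemma exists_bernstein_exponent_le {v b t : ℝ} (hv : 0 ≤ v) (hb : 0 < b) (ht : 0 ≤ t) :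
    ∃ l, 0 ≤ l ∧ l ≤ b⁻¹ ∧ v * l ^ 2 / 2 - l * (√(2 * v * t) + b * t) ≤ -t := by
  rcases ht.eq_or_lt with rfl | ht
  · exact ⟨0, le_rfl, inv_nonneg.mpr hb.le, by simp⟩
  set s := √(2 * v * t)
  have hs : 0 ≤ s := sqrt_nonneg _
  have hs2 : s ^ 2 = 2 * v * t := sq_sqrt (by positivity)
  have hD : 0 < s + 2 * b * t := by positivity
  refine ⟨2 * t / (s + 2 * b * t), by positivity, ?_, ?_⟩
  · rw [div_le_iff₀ hD, inv_mul_eq_div, le_div_iff₀ hb]; nlinarith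
  · rw [div_pow]
    field_simp
    nlinarith [mul_nonneg (mul_nonneg hs hb.le) ht.le]

namespace ProbabilityTheory

variable {Ω : Type*} {mΩ : MeasurableSpace Ω} {μ : Measure Ω}

lemma measureReal_abs_ge_le_add (X : Ω → ℝ) (r : ℝ) :
    μ.real {ω | r ≤ |X ω|} ≤ μ.real {ω | r ≤ X ω} + μ.real {ω | r ≤ (-X) ω} := by
  have hsplit : {ω | r ≤ |X ω|} = {ω | r ≤ X ω} ∪ {ω | r ≤ (-X) ω} := by
    ext ω; simp only [mem_ofPred_eq, mem_union, le_abs, Pi.neg_apply]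
  exact hsplit ▸ measureReal_union_le _ _

namespace HasSubgaussianMGF

variable {X Y : Ω → ℝ} {c : ℝ≥0}

lemma measureReal_abs_ge_le (h : HasSubgaussianMGF X c μ) {ε : ℝ} (hε : 0 ≤ ε) :
    μ.real {ω | ε ≤ |X ω|} ≤ 2 * exp (-ε ^ 2 / (2 * c)) := by
  calc μ.real {ω | ε ≤ |X ω|}
      ≤ μ.real {ω | ε ≤ X ω} + μ.real {ω | ε ≤ (-X) ω} := measureReal_abs_ge_le_add X ε
    _ ≤ exp (-ε ^ 2 / (2 * c)) + exp (-ε ^ 2 / (2 * c)) :=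
      add_le_add (h.measure_ge_le hε) (h.neg.measure_ge_le hε)
    _ = 2 * exp (-ε ^ 2 / (2 * c)) := by ring

lemma measureReal_abs_mul_ge_le [IsFiniteMeasure μ] (hX : HasSubgaussianMGF X c μ)
    (hY : HasSubgaussianMGF Y c μ) {t : ℝ} (ht : 0 ≤ t) :
    μ.real {ω | t ≤ |X ω * Y ω|} ≤ 4 * exp (-t / (2 * c)) := by
  have hsub : {ω | t ≤ |X ω * Y ω|} ⊆ {ω | √t ≤ |X ω|} ∪ {ω | √t ≤ |Y ω|} := by
    intro ω hω
    by_contra! hlt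
    simp only [mem_union, mem_ofPred_eq, not_or, not_le] at hlt
    have : |X ω * Y ω| < √t * √t := by
      rw [abs_mul]; exact mul_lt_mul'' hlt.1 hlt.2 (abs_nonneg _) (abs_nonneg _)
    exact (mul_self_sqrt ht ▸ this).not_ge hω
  calc μ.real {ω | t ≤ |X ω * Y ω|}
      ≤ μ.real {ω | √t ≤ |X ω|} + μ.real {ω | √t ≤ |Y ω|} :=
        (measureReal_mono hsub).trans (measureReal_union_le _ _)
    _ ≤ 2 * exp (-t / (2 * c)) + 2 * exp (-t / (2 * c)) := by
        have tailX := hX.measureReal_abs_ge_le (sqrt_nonneg t)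
        have tailY := hY.measureReal_abs_ge_le (sqrt_nonneg t)
        rw [sq_sqrt ht] at tailX tailY
        exact add_le_add tailX tailY
    _ = 4 * exp (-t / (2 * c)) := by ring

lemma integrable_mul {c' : ℝ≥0} (hX : HasSubgaussianMGF X c μ) (hY : HasSubgaussianMGF Y c' μ) :
    Integrable (fun ω ↦ X ω * Y ω) μ := by
  have hX2 : MemLp X 2 μ := by simpa using hX.memLp 2
  have hY2 : MemLp Y 2 μ := by simpa using hY.memLp 2
  exact hX2.integrable_mul hY2

end HasSubgaussianMGF

structure HasSubexponentialMGF (X : Ω → ℝ) (v b : ℝ) (μ : Measure Ω) : Prop where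
  integrable_exp_mul : ∀ t : ℝ, |t| ≤ b⁻¹ → Integrable (fun ω ↦ exp (t * X ω)) μ
  mgf_le : ∀ t : ℝ, |t| ≤ b⁻¹ → mgf X μ t ≤ exp (v * t ^ 2 / 2)

namespace HasSubexponentialMGF

variable {X : Ω → ℝ} {v b : ℝ}

lemma neg (h : HasSubexponentialMGF X v b μ) : HasSubexponentialMGF (-X) v b μ where
  integrable_exp_mul t ht := by
    simpa [mul_neg, neg_mul] using h.integrable_exp_mul (-t) (by rwa [abs_neg])
  mgf_le t ht := by
    simpa [mgf_neg] using h.mgf_le (-t) (by rwa [abs_neg])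

lemma measureReal_ge_le [IsFiniteMeasure μ] (h : HasSubexponentialMGF X v b μ) (hv : 0 ≤ v)
    (hb : 0 < b) {t : ℝ} (ht : 0 ≤ t) :
    μ.real {ω | √(2 * v * t) + b * t ≤ X ω} ≤ exp (-t) := by
  obtain ⟨l, hl, hlb, hexponent⟩ := exists_bernstein_exponent_le hv hb ht
  have hl' : |l| ≤ b⁻¹ := by rwa [abs_of_nonneg hl]
  calc μ.real {ω | √(2 * v * t) + b * t ≤ X ω}
      ≤ exp (-l * (√(2 * v * t) + b * t)) * mgf X μ l :=
        measure_ge_le_exp_mul_mgf _ hl (h.integrable_exp_mul l hl')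
    _ ≤ exp (-l * (√(2 * v * t) + b * t)) * exp (v * l ^ 2 / 2) := by
        gcongr; exact h.mgf_le l hl'
    _ ≤ exp (-t) := by
        rw [← exp_add]; gcongr; linarith

lemma measureReal_abs_ge_le [IsFiniteMeasure μ] (h : HasSubexponentialMGF X v b μ)
    (hv : 0 ≤ v) (hb : 0 < b) {t : ℝ} (ht : 0 ≤ t) :
    μ.real {ω | √(2 * v * t) + b * t ≤ |X ω|} ≤ 2 * exp (-t) := by
  calc μ.real {ω | √(2 * v * t) + b * t ≤ |X ω|}
      ≤ μ.real {ω | √(2 * v * t) + b * t ≤ X ω}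
        + μ.real {ω | √(2 * v * t) + b * t ≤ (-X) ω} := measureReal_abs_ge_le_add X _
    _ ≤ exp (-t) + exp (-t) :=
        add_le_add (h.measureReal_ge_le hv hb ht) (h.neg.measureReal_ge_le hv hb ht)
    _ = 2 * exp (-t) := by ring

end HasSubexponentialMGF

lemma lintegral_exp_mul_abs_sub_one_sub_le {W : Ω → ℝ} (hW : AEMeasurable W μ)
    {K a s : ℝ} (hK : 0 ≤ K) (hs : 0 ≤ s) (hsa : s < a)
    (htail : ∀ t, 0 ≤ t → μ {ω | t ≤ |W ω|} ≤ ENNReal.ofReal (K * exp (-a * t))) :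
    ∫⁻ ω, ENNReal.ofReal (exp (s * |W ω|) - 1 - s * |W ω|) ∂μ
      ≤ ENNReal.ofReal (K * (s ^ 2 / (a * (a - s)))) := by
  have ha : 0 < a := hs.trans_lt hsa
  set g : ℝ → ℝ := fun t ↦ s * (exp (s * t) - 1)
  have hg_nonneg : ∀ t, 0 ≤ t → 0 ≤ g t := fun t ht ↦
    mul_nonneg hs (sub_nonneg.mpr (one_le_exp (mul_nonneg hs ht)))
  have layercake := lintegral_comp_eq_lintegral_meas_le_mul μ
    (Filter.Eventually.of_forall fun ω ↦ abs_nonneg (W ω)) hW.abs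
    (fun t _ ↦ (by fun_prop : Continuous g).intervalIntegrable 0 t)
    ((ae_restrict_mem measurableSet_Ioi).mono fun t ht ↦ hg_nonneg t (le_of_lt ht))
  simp only [g, integral_mul_exp_mul_sub_one] at layercake
  obtain ⟨hint, hval⟩ := integral_Ioi_exp_neg_mul_mul_exp_sub_one ha hsa
  rw [layercake, ← hval, ← integral_const_mul,
    ofReal_integral_eq_lintegral_ofReal (hint.const_mul K)]
  · refine setLIntegral_mono' measurableSet_Ioi fun t ht ↦ ?_
    rw [← mul_assoc, ENNReal.ofReal_mul (p := K * exp (-a * t)) (by positivity)]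
    exact mul_le_mul_left (htail t (le_of_lt ht)) _
  · filter_upwards [ae_restrict_mem measurableSet_Ioi] with t ht
    exact mul_nonneg hK (mul_nonneg (exp_nonneg _) (hg_nonneg t (le_of_lt ht)))

lemma integral_exp_mul_sub_integral_le [IsProbabilityMeasure μ] {W : Ω → ℝ}
    (hW : Integrable W μ) {l B : ℝ} (hB : 0 ≤ B)
    (hG : ∫⁻ ω, ENNReal.ofReal (exp (|l| * |W ω|) - 1 - |l| * |W ω|) ∂μ ≤ ENNReal.ofReal B) :
    Integrable (fun ω ↦ exp (l * (W ω - μ[W]))) μ ∧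
      ∫ ω, exp (l * (W ω - μ[W])) ∂μ ≤ exp B := by
  set G : Ω → ℝ := fun ω ↦ exp (|l| * |W ω|) - 1 - |l| * |W ω|
  have hG_nonneg : ∀ ω, 0 ≤ G ω := fun ω ↦ by
    simp only [G]; linarith [add_one_le_exp (|l| * |W ω|)]
  have hG_meas : AEStronglyMeasurable G μ := by
    have := hW.aemeasurable; fun_prop
  have hG_int : Integrable G μ :=
    ⟨hG_meas, (hasFiniteIntegral_iff_ofReal (.of_forall hG_nonneg)).mpr
      (hG.trans_lt ENNReal.ofReal_lt_top)⟩
  have hG_le : ∫ ω, G ω ∂μ ≤ B := by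
    rw [integral_eq_lintegral_of_nonneg_ae (.of_forall hG_nonneg) hG_meas]
    exact ENNReal.toReal_le_of_le_ofReal hB hG
  have hpointwise : ∀ ω, exp (l * W ω) ≤ 1 + l * W ω + G ω := fun ω ↦ by
    have := exp_sub_one_sub_le_of_abs_le (abs_mul l (W ω)).le
    simp only [G]; linarith
  have haffine_int : Integrable (fun ω ↦ 1 + l * W ω) μ := (integrable_const 1).add (hW.const_mul l)
  have hdom_int : Integrable (fun ω ↦ 1 + l * W ω + G ω) μ := haffine_int.add hG_int
  have hexp_int : Integrable (fun ω ↦ exp (l * W ω)) μ :=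
    hdom_int.mono' (by have := hW.aemeasurable; fun_prop)
      (.of_forall fun ω ↦ by rw [norm_of_nonneg (exp_nonneg _)]; exact hpointwise ω)
  have hfactor : (fun ω ↦ exp (l * (W ω - μ[W]))) = fun ω ↦ exp (l * W ω) * exp (-(l * μ[W])) := by
    ext ω; rw [← exp_add]; ring_nf
  rw [hfactor]
  refine ⟨hexp_int.mul_const _, ?_⟩
  calc ∫ ω, exp (l * W ω) * exp (-(l * μ[W])) ∂μ
      = (∫ ω, exp (l * W ω) ∂μ) * exp (-(l * μ[W])) := integral_mul_const _ _
    _ ≤ (1 + l * μ[W] + B) * exp (-(l * μ[W])) := by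
        gcongr
        calc ∫ ω, exp (l * W ω) ∂μ ≤ ∫ ω, 1 + l * W ω + G ω ∂μ :=
              integral_mono hexp_int hdom_int hpointwise
          _ = 1 + l * μ[W] + ∫ ω, G ω ∂μ := by
              rw [integral_add haffine_int hG_int,
                integral_add (integrable_const 1) (hW.const_mul l), integral_const_mul]
              simp
          _ ≤ 1 + l * μ[W] + B := by linarith
    _ ≤ exp (l * μ[W] + B) * exp (-(l * μ[W])) := by
        gcongr; linarith [add_one_le_exp (l * μ[W] + B)]
    _ = exp B := by rw [← exp_add]; ring_nf

lemma hasSubexponentialMGF_sub_integral_of_measure_abs_ge_le [IsProbabilityMeasure μ]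
    {W : Ω → ℝ} (hW : Integrable W μ) {K a : ℝ} (hK : 0 ≤ K) (ha : 0 < a)
    (htail : ∀ t, 0 ≤ t → μ {ω | t ≤ |W ω|} ≤ ENNReal.ofReal (K * exp (-a * t))) :
    HasSubexponentialMGF (fun ω ↦ W ω - μ[W]) (4 * K / a ^ 2) (2 / a) μ := by
  have hmgf : ∀ l : ℝ, |l| ≤ (2 / a)⁻¹ →
      Integrable (fun ω ↦ exp (l * (W ω - μ[W]))) μ ∧
        ∫ ω, exp (l * (W ω - μ[W])) ∂μ ≤ exp (4 * K / a ^ 2 * l ^ 2 / 2) := by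
    intro l hl
    rw [inv_div] at hl
    have hla : |l| < a := hl.trans_lt (by linarith)
    have hbound : K * (|l| ^ 2 / (a * (a - |l|))) ≤ 4 * K / a ^ 2 * l ^ 2 / 2 := by
      have hfrac : |l| ^ 2 / (a * (a - |l|)) ≤ 2 * l ^ 2 / a ^ 2 := by
        rw [sq_abs, div_le_div_iff₀ (by nlinarith) (by positivity)]
        have hgap : 0 ≤ a - 2 * |l| := by linarith
        nlinarith [mul_nonneg (mul_nonneg (sq_nonneg l) ha.le) hgap]
      calc K * (|l| ^ 2 / (a * (a - |l|))) ≤ K * (2 * l ^ 2 / a ^ 2) := by gcongr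
        _ = 4 * K / a ^ 2 * l ^ 2 / 2 := by ring
    exact integral_exp_mul_sub_integral_le hW (by positivity)
      ((lintegral_exp_mul_abs_sub_one_sub_le hW.aemeasurable hK (abs_nonneg l) hla htail).trans
        (ENNReal.ofReal_le_ofReal hbound))
  exact ⟨fun l hl ↦ (hmgf l hl).1, fun l hl ↦ (hmgf l hl).2⟩

namespace HasSubgaussianMGF

variable {X Y : Ω → ℝ} {c : ℝ≥0}

lemma hasSubexponentialMGF_mul_sub_integral [IsProbabilityMeasure μ]
    (hX : HasSubgaussianMGF X c μ) (hY : HasSubgaussianMGF Y c μ) (hc : 0 < c) :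
    HasSubexponentialMGF (fun ω ↦ X ω * Y ω - μ[fun ω ↦ X ω * Y ω]) (64 * c ^ 2) (4 * c) μ := by
  have htail : ∀ t, 0 ≤ t →
      μ {ω | t ≤ |X ω * Y ω|} ≤ ENNReal.ofReal (4 * exp (-(2 * (c : ℝ))⁻¹ * t)) := fun t ht ↦ by
    rw [ENNReal.le_ofReal_iff_toReal_le (measure_ne_top _ _) (by positivity),
      show -(2 * (c : ℝ))⁻¹ * t = -t / (2 * c) by ring]
    exact hX.measureReal_abs_mul_ge_le hY ht
  convert hasSubexponentialMGF_sub_integral_of_measure_abs_ge_le (hX.integrable_mul hY)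
    (by norm_num) (by positivity) htail using 2
  · field_simp; ring
  · field_simp; norm_num

end HasSubgaussianMGF

end ProbabilityTheory

theorem stmt_4_general {Ω : Type} [MeasurableSpace Ω] (P : Measure Ω) [IsProbabilityMeasure P]
    (x y : Ω → ℝ) (σ : ℝ) (hσ : 0 < σ)
    (hxint : ∀ γ : ℝ, Integrable (fun ω => Real.exp (γ * x ω)) P)
    (hyint : ∀ γ : ℝ, Integrable (fun ω => Real.exp (γ * y ω)) P)
    (hxsub : ∀ γ : ℝ, ∫ ω, Real.exp (γ * x ω) ∂P ≤ Real.exp (γ ^ 2 * σ ^ 2 / 2))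
    (hysub : ∀ γ : ℝ, ∫ ω, Real.exp (γ * y ω) ∂P ≤ Real.exp (γ ^ 2 * σ ^ 2 / 2)) :
    ∀ t : ℝ, 0 < t →
      (P {ω | 4 * σ ^ 2 * (Real.sqrt (8 * t) + t) ≤
          |x ω * y ω - ∫ ω', x ω' * y ω' ∂P|}).toReal ≤ 2 * Real.exp (-t) := by
  intro t ht
  set c : ℝ≥0 := ⟨σ ^ 2, sq_nonneg σ⟩
  have hcσ : (c : ℝ) = σ ^ 2 := rfl
  have hc : 0 < c := NNReal.coe_pos.mp (hcσ ▸ by positivity)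
  have hX : HasSubgaussianMGF x c P := ⟨hxint, fun γ ↦ (hxsub γ).trans_eq (by rw [hcσ]; ring_nf)⟩
  have hY : HasSubgaussianMGF y c P := ⟨hyint, fun γ ↦ (hysub γ).trans_eq (by rw [hcσ]; ring_nf)⟩
  have hthreshold : √(2 * (64 * (c : ℝ) ^ 2) * t) + 4 * c * t = 4 * σ ^ 2 * (√(8 * t) + t) := by
    rw [hcσ, show 2 * (64 * (σ ^ 2) ^ 2) * t = (4 * σ ^ 2) ^ 2 * (8 * t) by ring,
      sqrt_mul (by positivity), sqrt_sq (by positivity)]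
    ring
  have hSE := hX.hasSubexponentialMGF_mul_sub_integral hY hc
  have hbound := hSE.measureReal_abs_ge_le (by positivity) (by positivity) ht.le
  rwa [hthreshold] at hbound

/-- if `x, y` are real sub-Gaussian random variables with variance
factor `σ² > 0` (i.e. `E exp(γx) ≤ exp(γ²σ²/2)` for all `γ`), then for all `t > 0`,
`P(|xy − E(xy)| ≥ 4σ²(√(8t)+t)) ≤ 2 e^{−t}`. -/
theorem stmt_4 {Ω : Type} [MeasurableSpace Ω] (P : Measure Ω) [IsProbabilityMeasure P]
    (x y : Ω → ℝ) (hx : Measurable x) (hy : Measurable y) (σ : ℝ) (hσ : 0 < σ)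
    (hxint : ∀ γ : ℝ, Integrable (fun ω => Real.exp (γ * x ω)) P)
    (hyint : ∀ γ : ℝ, Integrable (fun ω => Real.exp (γ * y ω)) P)
    (hxsub : ∀ γ : ℝ, ∫ ω, Real.exp (γ * x ω) ∂P ≤ Real.exp (γ ^ 2 * σ ^ 2 / 2))
    (hysub : ∀ γ : ℝ, ∫ ω, Real.exp (γ * y ω) ∂P ≤ Real.exp (γ ^ 2 * σ ^ 2 / 2))
    (hxy : Integrable (fun ω => x ω * y ω) P) :
    ∀ t : ℝ, 0 < t →
      (P {ω | 4 * σ ^ 2 * (Real.sqrt (8 * t) + t) ≤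
          |x ω * y ω - ∫ ω', x ω' * y ω' ∂P|}).toReal ≤ 2 * Real.exp (-t) :=
  stmt_4_general P x y σ hσ hxint hyint hxsub hysub
end

section
/- Let x and y be real-valued sub-Gaussian random variables, each with variance factor σ² > 0. Then E[(xy − E(xy))²] ≤ 64σ⁴ and, for every integer q ≥ 3, E[max(xy − E(xy), 0)^q] ≤ 2 · q! · (4σ²)^q. -/
/-!
Expanding `cosh (t z) = ∑ₙ (t z)^(2n) / (2n)!` and integrating against the sub-Gaussian bound
`E[cosh (t z)] ≤ exp (σ² t² / 2)` at `t² = 2n / σ²` gives `E[z^(2n)] ≤ n! (3σ²)^n`, using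
`(2n)! ≤ n! (2n)^n` and `e ≤ 3`. By AM-GM, `|xy|^k ≤ (x^(2k) + y^(2k)) / 2`, so
`E|xy|^k ≤ k! (3σ²)^k`; in particular `|E(xy)| ≤ 3σ²`. Both claims then follow from
`|xy − E(xy)| ≤ |xy| + |E(xy)|` and the binomial theorem: since `k! C(q,k) ≤ q!`,
`E[(|xy| + |E(xy)|)^q] ≤ (q + 1) q! (3σ²)^q ≤ 2 q! (4σ²)^q`, which for `q = 2` is `64σ⁴`.
-/

open MeasureTheory ProbabilityTheory Real Finset
open scoped NNReal Nat

theorem succ_mul_three_pow_le_two_mul_four_pow (q : ℕ) : (q + 1) * 3 ^ q ≤ 2 * 4 ^ q := by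
  rcases lt_or_ge q 2 with hq | hq
  · interval_cases q <;> norm_num
  · induction q, hq using Nat.le_induction with
    | base => norm_num
    | succ q hq ih =>
      have : (q + 2) * 3 ≤ 4 * (q + 1) := by omega
      rw [pow_succ, pow_succ]
      nlinarith [Nat.mul_le_mul_right (3 ^ q) this]

theorem succ_mul_factorial_mul_three_mul_pow_le {a : ℝ} (ha : 0 ≤ a) (q : ℕ) :
    (q + 1) * q ! * (3 * a) ^ q ≤ 2 * q ! * (4 * a) ^ q := by
  have h : ((q + 1) * 3 ^ q : ℝ) ≤ 2 * 4 ^ q := by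
    exact_mod_cast succ_mul_three_pow_le_two_mul_four_pow q
  calc (q + 1) * q ! * (3 * a) ^ q = ((q + 1) * 3 ^ q) * (q ! * a ^ q) := by ring
    _ ≤ (2 * 4 ^ q) * (q ! * a ^ q) := by gcongr
    _ = 2 * q ! * (4 * a) ^ q := by ring

theorem one_add_pow_two_mul_div_factorial_le_cosh (v : ℝ) {n : ℕ} (hn : n ≠ 0) :
    1 + v ^ (2 * n) / (2 * n)! ≤ cosh v := by
  have h := sum_le_hasSum {0, n}
    (fun i _ => div_nonneg ((even_two_mul i).pow_nonneg v) (by positivity)) (hasSum_cosh v)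
  rwa [sum_pair hn.symm, mul_zero, pow_zero, Nat.factorial_zero, Nat.cast_one, div_one] at h

theorem integrable_and_integral_le_of_le {Ω : Type*} [MeasurableSpace Ω] {μ : Measure Ω}
    {f g : Ω → ℝ} (hg : Integrable g μ) (hf : AEStronglyMeasurable f μ) (hf0 : ∀ ω, 0 ≤ f ω)
    (hfg : ∀ ω, f ω ≤ g ω) :
    Integrable f μ ∧ ∫ ω, f ω ∂μ ≤ ∫ ω, g ω ∂μ := by
  have hfi : Integrable f μ :=
    hg.mono' hf (ae_of_all _ fun ω => by rw [norm_of_nonneg (hf0 ω)]; exact hfg ω)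
  exact ⟨hfi, integral_mono hfi hg hfg⟩

theorem integral_abs_add_pow_le {Ω : Type*} [MeasurableSpace Ω] {μ : Measure Ω} {f : Ω → ℝ}
    {A b : ℝ} (hb : 0 ≤ b) (hbA : b ≤ A)
    (hf : ∀ k : ℕ, Integrable (fun ω => |f ω| ^ k) μ ∧ ∫ ω, |f ω| ^ k ∂μ ≤ k ! * A ^ k)
    (q : ℕ) :
    Integrable (fun ω => (|f ω| + b) ^ q) μ ∧
      ∫ ω, (|f ω| + b) ^ q ∂μ ≤ (q + 1) * q ! * A ^ q := by
  have hA : 0 ≤ A := hb.trans hbA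
  simp_rw [add_pow]
  have hterm : ∀ k ∈ range (q + 1),
      Integrable (fun ω => |f ω| ^ k * b ^ (q - k) * q.choose k) μ :=
    fun k _ => ((hf k).1.mul_const _).mul_const _
  refine ⟨integrable_finsetSum _ hterm, ?_⟩
  rw [integral_finsetSum _ hterm]
  calc ∑ k ∈ range (q + 1), ∫ ω, |f ω| ^ k * b ^ (q - k) * q.choose k ∂μ
      ≤ ∑ _k ∈ range (q + 1), (q ! * A ^ q : ℝ) := by
        refine sum_le_sum fun k hk => ?_
        have hkq : k ≤ q := Nat.lt_succ_iff.1 (mem_range.1 hk)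
        have hdesc : k ! * q.choose k ≤ q ! := by
          rw [← Nat.descFactorial_eq_factorial_mul_choose, ← Nat.factorial_mul_descFactorial hkq]
          exact Nat.le_mul_of_pos_left _ (Nat.factorial_pos _)
        rw [integral_mul_const, integral_mul_const]
        calc (∫ ω, |f ω| ^ k ∂μ) * b ^ (q - k) * q.choose k
            ≤ k ! * A ^ k * A ^ (q - k) * q.choose k := by
              gcongr
              exact (hf k).2
          _ = (k ! * q.choose k : ℕ) * A ^ q := by
            rw [mul_assoc _ (A ^ k), ← pow_add, Nat.add_sub_cancel' hkq]; push_cast; ring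
          _ ≤ q ! * A ^ q :=
            mul_le_mul_of_nonneg_right (by exact_mod_cast hdesc) (pow_nonneg hA q)
    _ = (q + 1) * q ! * A ^ q := by simp; ring

namespace ProbabilityTheory.HasSubgaussianMGF

variable {Ω : Type*} [MeasurableSpace Ω] {μ : Measure Ω} {X : Ω → ℝ} {c : ℝ≥0}

theorem integral_cosh_mul_le (h : HasSubgaussianMGF X c μ) (t : ℝ) :
    Integrable (fun ω => cosh (t * X ω)) μ ∧ ∫ ω, cosh (t * X ω) ∂μ ≤ exp (c * t ^ 2 / 2) := by
  have hexp : ∀ ω, cosh (t * X ω) = (exp (t * X ω) + exp (-t * X ω)) / 2 := fun ω => by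
    rw [cosh_eq, neg_mul]
  simp_rw [hexp]
  have hint := (h.integrable_exp_mul t).add (h.integrable_exp_mul (-t))
  refine ⟨hint.div_const 2, ?_⟩
  rw [integral_div, integral_add (h.integrable_exp_mul t) (h.integrable_exp_mul (-t))]
  have := add_le_add (h.mgf_le t) (h.mgf_le (-t))
  rw [neg_sq] at this
  unfold mgf at this
  linarith

theorem integral_pow_two_mul_le_of_pos [IsProbabilityMeasure μ] (h : HasSubgaussianMGF X c μ)
    {n : ℕ} (hn : n ≠ 0) {t : ℝ} (ht : 0 < t) :
    Integrable (fun ω => X ω ^ (2 * n)) μ ∧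
      ∫ ω, X ω ^ (2 * n) ∂μ ≤ (2 * n)! / t ^ (2 * n) * (exp (c * t ^ 2 / 2) - 1) := by
  obtain ⟨hcosh, hcosh_le⟩ := h.integral_cosh_mul_le t
  have hle : ∀ ω, X ω ^ (2 * n) ≤ (2 * n)! / t ^ (2 * n) * (cosh (t * X ω) - 1) := fun ω => by
    have := (div_le_iff₀' (by positivity)).1
      (le_sub_iff_add_le'.2 (one_add_pow_two_mul_div_factorial_le_cosh (t * X ω) hn))
    rw [div_mul_eq_mul_div, le_div_iff₀ (by positivity), mul_comm, ← mul_pow]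
    exact this
  obtain ⟨hint, hint_le⟩ := integrable_and_integral_le_of_le
    (f := fun ω => X ω ^ (2 * n)) (g := fun ω => (2 * n)! / t ^ (2 * n) * (cosh (t * X ω) - 1))
    ((hcosh.sub (integrable_const 1)).const_mul _) (h.aestronglyMeasurable.pow _)
    (fun ω => (even_two_mul n).pow_nonneg _) hle
  refine ⟨hint, hint_le.trans ?_⟩
  rw [integral_const_mul, integral_sub hcosh (integrable_const 1), integral_const]
  simp only [probReal_univ, smul_eq_mul, one_mul]
  gcongr

theorem integral_pow_two_mul_le [IsProbabilityMeasure μ] (h : HasSubgaussianMGF X c μ)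
    (hc : 0 < c) (n : ℕ) :
    Integrable (fun ω => X ω ^ (2 * n)) μ ∧ ∫ ω, X ω ^ (2 * n) ∂μ ≤ n ! * (3 * c) ^ n := by
  rcases eq_or_ne n 0 with rfl | hn
  · simp
  have hn' : (0 : ℝ) < 2 * n := by positivity
  have hc' : (0 : ℝ) < c := hc
  set t := √(2 * n / c)
  have ht2 : t ^ 2 = 2 * n / c := sq_sqrt (by positivity)
  obtain ⟨hint, hle⟩ := h.integral_pow_two_mul_le_of_pos hn (t := t) (by positivity)
  refine ⟨hint, hle.trans ?_⟩
  have hfact : ((2 * n)! : ℝ) ≤ n ! * (2 * n) ^ n := by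
    have := Nat.factorial_mul_descFactorial (show n ≤ 2 * n by omega)
    rw [show 2 * n - n = n by omega] at this
    exact_mod_cast this ▸ Nat.mul_le_mul_left _ (Nat.descFactorial_le_pow _ _)
  have hexp : exp n ≤ 3 ^ n := by
    rw [← exp_one_pow]
    exact pow_le_pow_left₀ (exp_pos 1).le (by linarith [exp_one_lt_d9]) n
  rw [pow_mul, ht2, show (c : ℝ) * (2 * n / c) / 2 = n by field_simp, mul_pow]
  calc ((2 * n)! : ℝ) / (2 * n / c) ^ n * (exp n - 1)
      ≤ n ! * (2 * n) ^ n / (2 * n / c) ^ n * 3 ^ n := by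
        gcongr
        exacts [sub_nonneg.2 (one_le_exp n.cast_nonneg), by linarith]
    _ = n ! * (3 ^ n * c ^ n) := by rw [div_pow]; field_simp

theorem integral_abs_mul_pow_le [IsProbabilityMeasure μ] {Y : Ω → ℝ}
    (hX : HasSubgaussianMGF X c μ) (hY : HasSubgaussianMGF Y c μ) (hc : 0 < c) (k : ℕ) :
    Integrable (fun ω => |X ω * Y ω| ^ k) μ ∧ ∫ ω, |X ω * Y ω| ^ k ∂μ ≤ k ! * (3 * c) ^ k := by
  obtain ⟨hXi, hXle⟩ := hX.integral_pow_two_mul_le hc k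
  obtain ⟨hYi, hYle⟩ := hY.integral_pow_two_mul_le hc k
  have hamgm : ∀ ω, |X ω * Y ω| ^ k ≤ (X ω ^ (2 * k) + Y ω ^ (2 * k)) / 2 := fun ω => by
    have := two_mul_le_add_sq (|X ω| ^ k) (|Y ω| ^ k)
    rw [← pow_mul, ← pow_mul, mul_comm k 2, (even_two_mul k).pow_abs,
      (even_two_mul k).pow_abs] at this
    rw [abs_mul, mul_pow]
    linarith
  have hmeas := hX.aestronglyMeasurable.mul hY.aestronglyMeasurable
  obtain ⟨hint, hle⟩ := integrable_and_integral_le_of_le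
    (g := fun ω => (X ω ^ (2 * k) + Y ω ^ (2 * k)) / 2) ((hXi.add hYi).div_const 2)
    ((continuous_abs.comp_aestronglyMeasurable hmeas).pow k)
    (fun ω => pow_nonneg (abs_nonneg _) k) hamgm
  refine ⟨hint, hle.trans ?_⟩
  rw [integral_div, integral_add hXi hYi]
  linarith

end ProbabilityTheory.HasSubgaussianMGF

theorem stmt_6_general {Ω : Type} [MeasurableSpace Ω] (P : Measure Ω) [IsProbabilityMeasure P]
    (x y : Ω → ℝ) (σ : ℝ) (hσ : 0 < σ)
    (hxint : ∀ γ : ℝ, Integrable (fun ω => Real.exp (γ * x ω)) P)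
    (hyint : ∀ γ : ℝ, Integrable (fun ω => Real.exp (γ * y ω)) P)
    (hxsub : ∀ γ : ℝ, ∫ ω, Real.exp (γ * x ω) ∂P ≤ Real.exp (γ ^ 2 * σ ^ 2 / 2))
    (hysub : ∀ γ : ℝ, ∫ ω, Real.exp (γ * y ω) ∂P ≤ Real.exp (γ ^ 2 * σ ^ 2 / 2)) :
    (Integrable (fun ω => (x ω * y ω - ∫ ω', x ω' * y ω' ∂P) ^ 2) P ∧
      (∫ ω, (x ω * y ω - ∫ ω', x ω' * y ω' ∂P) ^ 2 ∂P) ≤ 64 * σ ^ 4) ∧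
    ∀ q : ℕ, 3 ≤ q →
      Integrable (fun ω => (max (x ω * y ω - ∫ ω', x ω' * y ω' ∂P) 0) ^ q) P ∧
      (∫ ω, (max (x ω * y ω - ∫ ω', x ω' * y ω' ∂P) 0) ^ q ∂P) ≤
        2 * (Nat.factorial q) * (4 * σ ^ 2) ^ q := by
  set m := ∫ ω', x ω' * y ω' ∂P
  let c : ℝ≥0 := ⟨σ ^ 2, sq_nonneg σ⟩
  have hc : 0 < c := pow_pos hσ 2
  have hcσ : (c : ℝ) = σ ^ 2 := rfl
  have hX : HasSubgaussianMGF x c P :=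
    ⟨hxint, fun t => (hxsub t).trans_eq (by rw [hcσ, mul_comm])⟩
  have hY : HasSubgaussianMGF y c P :=
    ⟨hyint, fun t => (hysub t).trans_eq (by rw [hcσ, mul_comm])⟩
  have hmom := hX.integral_abs_mul_pow_le hY hc
  have hm : |m| ≤ 3 * c := abs_integral_le_integral_abs.trans (by simpa using (hmom 1).2)
  have hdev : ∀ ω, |x ω * y ω - m| ≤ |x ω * y ω| + |m| := fun ω => abs_sub _ _
  have hmeas : AEStronglyMeasurable (fun ω => x ω * y ω - m) P :=
    (hX.aestronglyMeasurable.mul hY.aestronglyMeasurable).sub aestronglyMeasurable_const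
  have hdom : ∀ (q : ℕ) (g : Ω → ℝ), AEStronglyMeasurable g P → (∀ ω, 0 ≤ g ω) →
      (∀ ω, g ω ≤ (|x ω * y ω| + |m|) ^ q) →
      Integrable g P ∧ ∫ ω, g ω ∂P ≤ 2 * q ! * (4 * σ ^ 2) ^ q := fun q g hg hg0 hgle => by
    obtain ⟨hbi, hble⟩ := integral_abs_add_pow_le (abs_nonneg m) hm hmom q
    obtain ⟨hint, hle⟩ := integrable_and_integral_le_of_le hbi hg hg0 hgle
    exact ⟨hint, hle.trans (hble.trans (succ_mul_factorial_mul_three_mul_pow_le c.2 q))⟩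
  refine ⟨?_, fun q _ => ?_⟩
  · obtain ⟨hint, hle⟩ := hdom 2 _ (hmeas.pow 2) (fun ω => sq_nonneg _)
      (fun ω => sq_le_sq' (abs_le.1 (hdev ω)).1 (abs_le.1 (hdev ω)).2)
    exact ⟨hint, hle.trans_eq (by norm_num; ring)⟩
  · have hpos : ∀ ω, 0 ≤ max (x ω * y ω - m) 0 := fun ω => le_max_right _ _
    exact hdom q _ ((hmeas.sup aestronglyMeasurable_const).pow q) (fun ω => pow_nonneg (hpos ω) q)
      fun ω => pow_le_pow_left₀ (hpos ω) (max_le ((le_abs_self _).trans (hdev ω)) (by positivity)) q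

/-- for real sub-Gaussian `x, y` with variance factor `σ² > 0` (not
necessarily independent), `E[(xy − E(xy))²] ≤ 64σ⁴` and, for every integer `q ≥ 3`,
`E[max(xy − E(xy), 0)^q] ≤ 2 q! (4σ²)^q`. -/
theorem stmt_6 {Ω : Type} [MeasurableSpace Ω] (P : Measure Ω) [IsProbabilityMeasure P]
    (x y : Ω → ℝ) (hx : Measurable x) (hy : Measurable y) (σ : ℝ) (hσ : 0 < σ)
    (hxint : ∀ γ : ℝ, Integrable (fun ω => Real.exp (γ * x ω)) P)
    (hyint : ∀ γ : ℝ, Integrable (fun ω => Real.exp (γ * y ω)) P)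
    (hxsub : ∀ γ : ℝ, ∫ ω, Real.exp (γ * x ω) ∂P ≤ Real.exp (γ ^ 2 * σ ^ 2 / 2))
    (hysub : ∀ γ : ℝ, ∫ ω, Real.exp (γ * y ω) ∂P ≤ Real.exp (γ ^ 2 * σ ^ 2 / 2))
    (hxy : Integrable (fun ω => x ω * y ω) P) :
    (Integrable (fun ω => (x ω * y ω - ∫ ω', x ω' * y ω' ∂P) ^ 2) P ∧
      (∫ ω, (x ω * y ω - ∫ ω', x ω' * y ω' ∂P) ^ 2 ∂P) ≤ 64 * σ ^ 4) ∧
    ∀ q : ℕ, 3 ≤ q →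
      Integrable (fun ω => (max (x ω * y ω - ∫ ω', x ω' * y ω' ∂P) 0) ^ q) P ∧
      (∫ ω, (max (x ω * y ω - ∫ ω', x ω' * y ω' ∂P) 0) ^ q ∂P) ≤
        2 * (Nat.factorial q) * (4 * σ ^ 2) ^ q :=
  stmt_6_general P x y σ hσ hxint hyint hxsub hysub
end

section
/- Let f_{χ_d} denote the probability density function of the chi distribution with d degrees of freedom (the distribution of ‖Z‖ for Z ~ N(0, I_d)). Then sup_{t ≥ 0} f_{χ_d}(t) = O(1) as d → ∞; i.e., there is a universal constant C such that sup_{t≥0} f_{χ_d}(t) ≤ C for all d ≥ 1. -/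
/-!
With `n = d - 1`, the chi density is `tⁿ e^{-t²/2}` divided by its integral over `(0, ∞)`. For every
`s > 0`, comparing `tⁿ ≤ sⁿ e^{n (t/s - 1)}` with the Gaussian factor gives
`tⁿ e^{-t²/2} ≤ e^{((s² - n) / s)² / 2} sⁿ e^{-s²/2}`, and the exponent is at most `2` for `s` in the
unit interval `(√n, √n + 1]` just to the right of the mode. Averaging over that interval bounds
every value of the unnormalised density by `e²` times its integral, so the density is at most `e²`.
-/

open Real

/-- The p.d.f. of the chi distribution with `d` degrees of freedom. -/
noncomputable def chiPDF (d : ℕ) (t : ℝ) : ℝ :=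
  2 ^ (1 - (d : ℝ) / 2) * t ^ (d - 1) * Real.exp (-t ^ 2 / 2) / Real.Gamma ((d : ℝ) / 2)

open MeasureTheory Set

noncomputable def chiKernel (n : ℕ) (t : ℝ) : ℝ := t ^ n * exp (-t ^ 2 / 2)

lemma chiKernel_nonneg (n : ℕ) {t : ℝ} (ht : 0 ≤ t) : 0 ≤ chiKernel n t := by
  unfold chiKernel; positivity

lemma chiKernel_le_exp_mul (n : ℕ) {s t : ℝ} (ht : 0 ≤ t) (hs : 0 < s) :
    chiKernel n t ≤ exp (((s ^ 2 - n) / s) ^ 2 / 2) * chiKernel n s := by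
  have hpow : t ^ n ≤ s ^ n * exp (n * (t / s - 1)) := by
    have hratio : t / s ≤ exp (t / s - 1) := by linarith [add_one_le_exp (t / s - 1)]
    calc t ^ n = (t / s) ^ n * s ^ n := by rw [div_pow, div_mul_cancel₀ _ (by positivity)]
      _ ≤ exp (t / s - 1) ^ n * s ^ n := by gcongr
      _ = s ^ n * exp (n * (t / s - 1)) := by rw [← exp_nat_mul, mul_comm]
  have hexponent : n * (t / s - 1) + -t ^ 2 / 2 ≤ ((s ^ 2 - n) / s) ^ 2 / 2 + -s ^ 2 / 2 := by
    have hgap : ((s ^ 2 - n) / s) ^ 2 / 2 + -s ^ 2 / 2 - (n * (t / s - 1) + -t ^ 2 / 2)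
        = (n - t * s) ^ 2 / (2 * s ^ 2) := by
      field_simp; ring
    have : 0 ≤ (n - t * s) ^ 2 / (2 * s ^ 2) := by positivity
    linarith
  calc chiKernel n t ≤ s ^ n * exp (n * (t / s - 1)) * exp (-t ^ 2 / 2) := by
        unfold chiKernel; gcongr
    _ = s ^ n * exp (n * (t / s - 1) + -t ^ 2 / 2) := by rw [exp_add, mul_assoc]
    _ ≤ s ^ n * exp (((s ^ 2 - n) / s) ^ 2 / 2 + -s ^ 2 / 2) := by gcongr
    _ = exp (((s ^ 2 - n) / s) ^ 2 / 2) * chiKernel n s := by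
        rw [exp_add, chiKernel]; ring

lemma chiKernel_le_exp_two_mul (n : ℕ) {s t : ℝ} (ht : 0 ≤ t) (hs : s ∈ Ioc (√n) (√n + 1)) :
    chiKernel n t ≤ exp 2 * chiKernel n s := by
  have hs_pos : 0 < s := (sqrt_nonneg _).trans_lt hs.1
  have hsq := sq_sqrt (n.cast_nonneg (α := ℝ))
  have hquot : (s ^ 2 - n) / s ≤ 2 := by
    rw [div_le_iff₀ hs_pos]; nlinarith [hs.1, hs.2, sqrt_nonneg n]
  have hquot_nonneg : 0 ≤ (s ^ 2 - n) / s :=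
    div_nonneg (by nlinarith [hs.1, sqrt_nonneg n]) hs_pos.le
  have hexponent : ((s ^ 2 - n) / s) ^ 2 / 2 ≤ 2 := by nlinarith
  calc chiKernel n t ≤ exp (((s ^ 2 - n) / s) ^ 2 / 2) * chiKernel n s :=
        chiKernel_le_exp_mul n ht hs_pos
    _ ≤ exp 2 * chiKernel n s := by
        gcongr
        exact chiKernel_nonneg n hs_pos.le

lemma chiKernel_eq_rpow_mul_exp (n : ℕ) (t : ℝ) :
    chiKernel n t = t ^ (n : ℝ) * exp (-(1 / 2) * t ^ (2 : ℝ)) := by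
  rw [chiKernel, rpow_natCast, rpow_two]; ring_nf

lemma integrableOn_chiKernel (n : ℕ) : IntegrableOn (chiKernel n) (Ioi 0) := by
  rw [funext (chiKernel_eq_rpow_mul_exp n)]
  exact integrableOn_rpow_mul_exp_neg_mul_rpow (by linarith [n.cast_nonneg (α := ℝ)]) two_pos
      (by norm_num : (0 : ℝ) < 1 / 2)

lemma integral_chiKernel (n : ℕ) :
    ∫ t in Ioi 0, chiKernel n t = 2 ^ (((n : ℝ) + 1) / 2 - 1) * Gamma (((n : ℝ) + 1) / 2) := by
  simp only [chiKernel_eq_rpow_mul_exp]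
  rw [integral_rpow_mul_exp_neg_mul_rpow two_pos (by linarith [n.cast_nonneg (α := ℝ)])
    (by norm_num), rpow_sub two_pos, rpow_one, one_div, inv_rpow zero_le_two, ← rpow_neg zero_le_two]
  ring_nf

lemma integral_chiKernel_pos (n : ℕ) : 0 < ∫ t in Ioi 0, chiKernel n t := by
  rw [integral_chiKernel]
  exact mul_pos (by positivity) (Gamma_pos_of_pos (by positivity))

lemma chiKernel_le_exp_two_mul_integral (n : ℕ) {t : ℝ} (ht : 0 ≤ t) :
    chiKernel n t ≤ exp 2 * ∫ s in Ioi 0, chiKernel n s := by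
  have hsub : Ioc (√n) (√n + 1) ⊆ Ioi 0 := fun s hs => (sqrt_nonneg _).trans_lt hs.1
  have hint := integrableOn_chiKernel n
  calc chiKernel n t = chiKernel n t * volume.real (Ioc (√n) (√n + 1)) := by
        rw [Real.volume_real_Ioc_of_le (by linarith), add_sub_cancel_left, mul_one]
    _ ≤ ∫ s in Ioc (√n) (√n + 1), exp 2 * chiKernel n s :=
        setIntegral_ge_of_const_le_real measurableSet_Ioc (by simp)
          (fun s hs => chiKernel_le_exp_two_mul n ht hs) ((hint.mono_set hsub).const_mul _)
    _ = exp 2 * ∫ s in Ioc (√n) (√n + 1), chiKernel n s := integral_const_mul _ _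
    _ ≤ exp 2 * ∫ s in Ioi 0, chiKernel n s := by
        gcongr ?_ * ?_
        exact setIntegral_mono_set hint
          ((ae_restrict_mem measurableSet_Ioi).mono fun s hs => chiKernel_nonneg n (le_of_lt hs))
          hsub.eventuallyLE

lemma chiPDF_succ (n : ℕ) (t : ℝ) :
    chiPDF (n + 1) t = chiKernel n t / ∫ s in Ioi 0, chiKernel n s := by
  have hnorm : (2 : ℝ) ^ (1 - ((n : ℝ) + 1) / 2) = (2 ^ (((n : ℝ) + 1) / 2 - 1))⁻¹ := by
    rw [← rpow_neg zero_le_two, neg_sub]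
  rw [chiPDF, integral_chiKernel, chiKernel, Nat.add_sub_cancel]
  push_cast
  rw [hnorm]
  field_simp

/-- the density of the chi distribution with `d` degrees of freedom is
uniformly bounded in `t ≥ 0` by a universal constant, for all `d ≥ 1`. -/
theorem stmt_9 :
    ∃ C : ℝ, 0 < C ∧ ∀ d : ℕ, 1 ≤ d → ∀ t : ℝ, 0 ≤ t → chiPDF d t ≤ C := by
  refine ⟨exp 2, exp_pos 2, fun d hd t ht => ?_⟩
  obtain ⟨n, rfl⟩ := Nat.exists_eq_add_of_le' hd
  rw [chiPDF_succ, div_le_iff₀ (integral_chiKernel_pos n)]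
  exact chiKernel_le_exp_two_mul_integral n ht
end

section
/- Let real-valued random variables X₁,...,X_n be independent and suppose there are positive numbers ν and c such that Σ_{i=1}^n E[X_i²] ≤ ν and Σ_{i=1}^n E[max(X_i,0)^q] ≤ q! ν c^{q−2}/2 for all integers q ≥ 3. Then for all t > 0, P(Σ_{i=1}^n (X_i − E X_i) ≥ √(2νt) + ct) ≤ e^{−t}. -/
/-!
For `y ∈ ℝ`, `exp y ≤ 1 + y + y²/2 + ∑_{q ≥ 3} (y₊)^q / q!`, since for `y ≤ 0` the exponential
already lies below its quadratic Taylor polynomial. Taking expectations at `y = λ Xᵢ` and using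
`log x ≤ x - 1`, the centred cumulant generating function of `Xᵢ` is at most
`λ² E[Xᵢ²]/2 + ∑_{q ≥ 3} λ^q E[(Xᵢ)₊^q] / q!`. Summed over `i`, the moment hypotheses turn this
into the geometric series bound `ν λ² / (2 (1 - c λ))` for `0 ≤ λ < 1/c`, and the Chernoff bound
with `λ = a / (1 + c a)`, `a = √(2t/ν)`, gives exactly `e^{-t}`.
-/

open MeasureTheory ProbabilityTheory Real
open scoped Nat

noncomputable def expTail (y : ℝ) : ℝ := exp y - (1 + y + y ^ 2 / 2)

lemma hasSum_expTail (y : ℝ) : HasSum (fun q : ℕ => y ^ (q + 3) / (q + 3)!) (expTail y) := by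
  have h := (hasSum_nat_add_iff' 3).mpr (NormedSpace.expSeries_div_hasSum_exp y)
  have hhead : ∑ q ∈ Finset.range 3, y ^ q / q ! = 1 + y + y ^ 2 / 2 := by
    norm_num [Finset.sum_range_succ]
  rwa [← Real.exp_eq_exp_ℝ, hhead] at h

lemma hasSum_expTail_mul (l y : ℝ) :
    HasSum (fun q : ℕ => l ^ (q + 3) / (q + 3)! * y ^ (q + 3)) (expTail (l * y)) := by
  convert hasSum_expTail (l * y) using 2 with q
  ring

lemma continuous_expTail : Continuous expTail := by
  unfold expTail
  fun_prop

lemma exp_le_quadratic_of_nonpos {y : ℝ} (hy : y ≤ 0) : exp y ≤ 1 + y + y ^ 2 / 2 := by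
  have hanti : Antitone fun x : ℝ => 1 + x + x ^ 2 / 2 - exp x := by
    refine antitone_of_deriv_nonpos (by fun_prop) fun x => ?_
    have hderiv : HasDerivAt (fun x : ℝ => 1 + x + x ^ 2 / 2 - exp x) (1 + x - exp x) x :=
      ((((hasDerivAt_id x).const_add 1).add ((hasDerivAt_pow 2 x).div_const 2)).sub
        (hasDerivAt_exp x)).congr_deriv (by simp)
    rw [hderiv.deriv]
    linarith [add_one_le_exp x]
  simpa using hanti hy

lemma exp_mul_le_quadratic_add_expTail {l : ℝ} (hl : 0 ≤ l) (x : ℝ) :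
    exp (l * x) ≤ 1 + l * x + l ^ 2 / 2 * x ^ 2 + expTail (l * max x 0) := by
  rcases le_total x 0 with hx | hx
  · rw [max_eq_right hx, mul_zero, expTail, exp_zero]
    linarith [exp_le_quadratic_of_nonpos (mul_nonpos_of_nonneg_of_nonpos hl hx)]
  · rw [max_eq_left hx, expTail]
    linarith

lemma integrable_of_hasSum_of_summable_integral_norm {α E : Type*} [MeasurableSpace α]
    {μ : Measure α} [NormedAddCommGroup E] {F : ℕ → α → E} {f : α → E}
    (hf : AEStronglyMeasurable f μ) (hF_int : ∀ q, Integrable (F q) μ)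
    (hF_sum : Summable fun q => ∫ a, ‖F q a‖ ∂μ) (hFf : ∀ᵐ a ∂μ, HasSum (F · a) (f a)) :
    Integrable f μ := by
  refine ⟨hf, ?_⟩
  calc ∫⁻ a, ‖f a‖ₑ ∂μ ≤ ∫⁻ a, ∑' q, ‖F q a‖ₑ ∂μ :=
        lintegral_mono_ae (hFf.mono fun a ha => ha.tsum_eq ▸ enorm_tsum_le_tsum_enorm)
    _ = ∑' q, ENNReal.ofReal (∫ a, ‖F q a‖ ∂μ) := by
        rw [lintegral_tsum fun q => (hF_int q).1.enorm]
        simp_rw [ofReal_integral_norm_eq_lintegral_enorm (hF_int _)]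
    _ = ENNReal.ofReal (∑' q, ∫ a, ‖F q a‖ ∂μ) :=
        (ENNReal.ofReal_tsum_of_nonneg (fun q => integral_nonneg fun a => norm_nonneg _)
          hF_sum).symm
    _ < ⊤ := ENNReal.ofReal_lt_top

section PosPartMoments

variable {Ω : Type*} [MeasurableSpace Ω] {P : Measure Ω} {X : Ω → ℝ} {l : ℝ}

lemma summable_integral_norm_of_summable_posPart_moments (hl : 0 ≤ l)
    (hsum : Summable fun q : ℕ => l ^ (q + 3) / (q + 3)! * ∫ ω, max (X ω) 0 ^ (q + 3) ∂P) :
    Summable fun q : ℕ => ∫ ω, ‖l ^ (q + 3) / (q + 3)! * max (X ω) 0 ^ (q + 3)‖ ∂P := by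
  refine hsum.congr fun q => ?_
  rw [← integral_const_mul]
  congr with ω
  rw [Real.norm_of_nonneg (by positivity)]

lemma integrable_expTail_mul_max (hX : AEStronglyMeasurable X P)
    (hint : ∀ q : ℕ, 3 ≤ q → Integrable (fun ω => max (X ω) 0 ^ q) P) (hl : 0 ≤ l)
    (hsum : Summable fun q : ℕ => l ^ (q + 3) / (q + 3)! * ∫ ω, max (X ω) 0 ^ (q + 3) ∂P) :
    Integrable (fun ω => expTail (l * max (X ω) 0)) P :=
  integrable_of_hasSum_of_summable_integral_norm
    (continuous_expTail.comp_aestronglyMeasurable ((hX.sup aestronglyMeasurable_const).const_mul l))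
    (fun q => (hint (q + 3) (by omega)).const_mul _)
    (summable_integral_norm_of_summable_posPart_moments hl hsum)
    (ae_of_all _ fun ω => hasSum_expTail_mul l _)

lemma hasSum_integral_expTail_mul_max
    (hint : ∀ q : ℕ, 3 ≤ q → Integrable (fun ω => max (X ω) 0 ^ q) P) (hl : 0 ≤ l)
    (hsum : Summable fun q : ℕ => l ^ (q + 3) / (q + 3)! * ∫ ω, max (X ω) 0 ^ (q + 3) ∂P) :
    HasSum (fun q : ℕ => l ^ (q + 3) / (q + 3)! * ∫ ω, max (X ω) 0 ^ (q + 3) ∂P)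
      (∫ ω, expTail (l * max (X ω) 0) ∂P) := by
  have h := hasSum_integral_of_summable_integral_norm
    (fun q => (hint (q + 3) (by omega)).const_mul _)
    (summable_integral_norm_of_summable_posPart_moments hl hsum)
  simp_rw [integral_const_mul, fun ω => (hasSum_expTail_mul l (max (X ω) 0)).tsum_eq] at h
  exact h

lemma integrable_quadratic_add_expTail [IsFiniteMeasure P] (h1 : Integrable X P)
    (h2 : Integrable (fun ω => X ω ^ 2) P)
    (hint : ∀ q : ℕ, 3 ≤ q → Integrable (fun ω => max (X ω) 0 ^ q) P) (hl : 0 ≤ l)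
    (hsum : Summable fun q : ℕ => l ^ (q + 3) / (q + 3)! * ∫ ω, max (X ω) 0 ^ (q + 3) ∂P) :
    Integrable (fun ω => 1 + l * X ω + l ^ 2 / 2 * X ω ^ 2 + expTail (l * max (X ω) 0)) P :=
  (((integrable_const 1).add (h1.const_mul l)).add (h2.const_mul _)).add
    (integrable_expTail_mul_max h1.1 hint hl hsum)

variable [IsProbabilityMeasure P]

lemma integrable_exp_mul_of_summable_posPart_moments (h1 : Integrable X P)
    (h2 : Integrable (fun ω => X ω ^ 2) P)
    (hint : ∀ q : ℕ, 3 ≤ q → Integrable (fun ω => max (X ω) 0 ^ q) P) (hl : 0 ≤ l)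
    (hsum : Summable fun q : ℕ => l ^ (q + 3) / (q + 3)! * ∫ ω, max (X ω) 0 ^ (q + 3) ∂P) :
    Integrable (fun ω => exp (l * X ω)) P := by
  refine (integrable_quadratic_add_expTail h1 h2 hint hl hsum).mono'
    (continuous_exp.comp_aestronglyMeasurable (h1.1.const_mul l)) (ae_of_all _ fun ω => ?_)
  rw [Real.norm_of_nonneg (exp_nonneg _)]
  exact exp_mul_le_quadratic_add_expTail hl _

lemma cgf_le_of_summable_posPart_moments (h1 : Integrable X P)
    (h2 : Integrable (fun ω => X ω ^ 2) P)
    (hint : ∀ q : ℕ, 3 ≤ q → Integrable (fun ω => max (X ω) 0 ^ q) P) (hl : 0 ≤ l)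
    (hsum : Summable fun q : ℕ => l ^ (q + 3) / (q + 3)! * ∫ ω, max (X ω) 0 ^ (q + 3) ∂P) :
    cgf X P l ≤ l * P[X] + l ^ 2 / 2 * ∫ ω, X ω ^ 2 ∂P + ∫ ω, expTail (l * max (X ω) 0) ∂P := by
  have hexp := integrable_exp_mul_of_summable_posPart_moments h1 h2 hint hl hsum
  have hmgf : mgf X P l ≤ 1 + (l * P[X] + l ^ 2 / 2 * ∫ ω, X ω ^ 2 ∂P
      + ∫ ω, expTail (l * max (X ω) 0) ∂P) := by
    refine (integral_mono hexp (integrable_quadratic_add_expTail h1 h2 hint hl hsum)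
      fun ω => exp_mul_le_quadratic_add_expTail hl (X ω)).trans_eq ?_
    have hlin : Integrable (fun ω => 1 + l * X ω) P := (integrable_const 1).add (h1.const_mul l)
    rw [integral_add, integral_add, integral_add, integral_const_mul, integral_const_mul]
    · simp [add_assoc]
    exacts [integrable_const 1, h1.const_mul l, hlin, h2.const_mul _, hlin.add (h2.const_mul _),
      integrable_expTail_mul_max h1.1 hint hl hsum]
  rw [cgf]
  linarith [log_le_sub_one_of_pos (mgf_pos hexp)]

end PosPartMoments

lemma measureReal_sum_sub_integral_ge_le {Ω ι : Type*} [MeasurableSpace Ω] {P : Measure Ω}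
    [IsProbabilityMeasure P] [Fintype ι] {X : ι → Ω → ℝ} {l : ℝ}
    (hmeas : ∀ i, Measurable (X i)) (hindep : iIndepFun X P)
    (hexp : ∀ i, Integrable (fun ω => exp (l * X i ω)) P) (hl : 0 ≤ l) (s : ℝ) :
    P.real {ω | s ≤ ∑ i, (X i ω - P[X i])} ≤ exp (-l * s + ∑ i, (cgf (X i) P l - l * P[X i])) := by
  have hset : {ω | s ≤ ∑ i, (X i ω - P[X i])} = {ω | s + ∑ i, P[X i] ≤ (∑ i, X i) ω} := by
    ext ω
    simp [Finset.sum_sub_distrib, le_sub_iff_add_le]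
  have hexp_sum : Integrable (fun ω => exp (l * (∑ i, X i) ω)) P :=
    hindep.integrable_exp_mul_sum hmeas fun i _ => hexp i
  rw [hset]
  refine (measure_ge_le_exp_cgf _ hl hexp_sum).trans_eq ?_
  rw [hindep.cgf_sum hmeas fun i _ => hexp i, Finset.sum_sub_distrib, ← Finset.mul_sum]
  ring_nf

section MomentSeries

variable {Ω ι : Type*} [MeasurableSpace Ω] {P : Measure Ω} [Fintype ι] {X : ι → Ω → ℝ}
  {ν c l : ℝ}

lemma sum_posPart_moment_term_le
    (hq : ∀ q : ℕ, 3 ≤ q →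
      ∑ i, ∫ ω, (max (X i ω) 0) ^ q ∂P ≤ q ! * ν * c ^ (q - 2) / 2)
    (hl : 0 ≤ l) (q : ℕ) :
    ∑ i, l ^ (q + 3) / (q + 3)! * ∫ ω, max (X i ω) 0 ^ (q + 3) ∂P
      ≤ ν * l ^ 2 / 2 * (l * c) * (l * c) ^ q := by
  rw [← Finset.mul_sum]
  calc l ^ (q + 3) / (q + 3)! * ∑ i, ∫ ω, max (X i ω) 0 ^ (q + 3) ∂P
      ≤ l ^ (q + 3) / (q + 3)! * ((q + 3)! * ν * c ^ (q + 1) / 2) := by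
        gcongr
        simpa using hq (q + 3) (by omega)
    _ = ν * l ^ 2 / 2 * (l * c) * (l * c) ^ q := by
        field_simp
        ring

lemma summable_posPart_moment_term
    (hq : ∀ q : ℕ, 3 ≤ q →
      ∑ i, ∫ ω, (max (X i ω) 0) ^ q ∂P ≤ q ! * ν * c ^ (q - 2) / 2)
    (hl : 0 ≤ l) (hc : 0 ≤ c) (hlc : l * c < 1) (i : ι) :
    Summable fun q : ℕ => l ^ (q + 3) / (q + 3)! * ∫ ω, max (X i ω) 0 ^ (q + 3) ∂P := by
  have hterm_nonneg : ∀ j q, 0 ≤ l ^ (q + 3) / (q + 3)! * ∫ ω, max (X j ω) 0 ^ (q + 3) ∂P :=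
    fun j q => by positivity
  refine .of_nonneg_of_le (hterm_nonneg i) (fun q => ?_)
    ((summable_geometric_of_lt_one (by positivity) hlc).mul_left (ν * l ^ 2 / 2 * (l * c)))
  exact (Finset.single_le_sum (fun j _ => hterm_nonneg j q) (Finset.mem_univ i)).trans
    (sum_posPart_moment_term_le hq hl q)

lemma sum_tsum_posPart_moment_term_le
    (hq : ∀ q : ℕ, 3 ≤ q →
      ∑ i, ∫ ω, (max (X i ω) 0) ^ q ∂P ≤ q ! * ν * c ^ (q - 2) / 2)
    (hl : 0 ≤ l) (hc : 0 ≤ c) (hlc : l * c < 1) :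
    ∑ i, ∑' q : ℕ, l ^ (q + 3) / (q + 3)! * ∫ ω, max (X i ω) 0 ^ (q + 3) ∂P
      ≤ ν * l ^ 2 / 2 * (l * c) * (1 - l * c)⁻¹ := by
  have hsummable := summable_posPart_moment_term hq hl hc hlc
  rw [← Summable.tsum_finsetSum fun i _ => hsummable i,
    ← tsum_geometric_of_lt_one (by positivity) hlc, ← tsum_mul_left]
  exact Summable.tsum_le_tsum (sum_posPart_moment_term_le hq hl)
    (summable_sum fun i _ => hsummable i) ((summable_geometric_of_lt_one (by positivity) hlc).mul_left _)

end MomentSeries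

lemma exists_bernstein_parameter {ν c t : ℝ} (hν : 0 < ν) (hc : 0 ≤ c) (ht : 0 < t) :
    ∃ l, 0 ≤ l ∧ l * c < 1 ∧
      -(l * (√(2 * ν * t) + c * t)) + ν * l ^ 2 / (2 * (1 - l * c)) = -t := by
  set a := √(2 * t / ν)
  have ha : 0 ≤ a := sqrt_nonneg _
  have hsq : ν * a ^ 2 = 2 * t := by
    rw [sq_sqrt (by positivity)]
    field_simp
  have hsqrt : √(2 * ν * t) = ν * a := by
    rw [← sqrt_sq (by positivity : 0 ≤ ν * a), mul_pow, sq_sqrt (by positivity)]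
    field_simp
  have hden : 0 < 1 + c * a := by positivity
  refine ⟨a / (1 + c * a), by positivity, ?_, ?_⟩
  · rw [div_mul_eq_mul_div, div_lt_one hden]
    linarith [mul_comm a c]
  · have h1 : 1 - a / (1 + c * a) * c = 1 / (1 + c * a) := by field_simp; ring
    rw [h1, hsqrt]
    field_simp
    linear_combination (-1) * hsq

/-- Bernstein's inequality for sub-exponential variables,
Boucheron–Lugosi–Massart Thm 2.10: if `X₁,…,X_n` are independent real random
variables with `Σ E[Xᵢ²] ≤ ν` and `Σ E[(Xᵢ)₊^q] ≤ q! ν c^{q−2}/2` for all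
integers `q ≥ 3`, then for all `t > 0`,
`P(Σ (Xᵢ − E Xᵢ) ≥ √(2νt) + ct) ≤ e^{−t}`. -/
theorem stmt_19 {Ω : Type} [MeasurableSpace Ω] (P : Measure Ω) [IsProbabilityMeasure P]
    (n : ℕ) (X : Fin n → Ω → ℝ) (hmeas : ∀ i, Measurable (X i))
    (hindep : iIndepFun X P)
    (hint1 : ∀ i, Integrable (X i) P)
    (hint2 : ∀ i, Integrable (fun ω => X i ω ^ 2) P)
    (hintq : ∀ i, ∀ q : ℕ, 3 ≤ q → Integrable (fun ω => (max (X i ω) 0) ^ q) P)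
    (ν c : ℝ) (hν : 0 < ν) (hc : 0 < c)
    (h2 : ∑ i, ∫ ω, X i ω ^ 2 ∂P ≤ ν)
    (hq : ∀ q : ℕ, 3 ≤ q →
      ∑ i, ∫ ω, (max (X i ω) 0) ^ q ∂P ≤ (Nat.factorial q) * ν * c ^ (q - 2) / 2) :
    ∀ t : ℝ, 0 < t →
      (P {ω | Real.sqrt (2 * ν * t) + c * t ≤
          ∑ i, (X i ω - ∫ ω', X i ω' ∂P)}).toReal ≤ Real.exp (-t) := by
  intro t ht
  obtain ⟨l, hl, hlc, hopt⟩ := exists_bernstein_parameter hν hc.le ht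
  have hsummable := summable_posPart_moment_term hq hl hc.le hlc
  have htails : ∑ i, ∫ ω, expTail (l * max (X i ω) 0) ∂P
      ≤ ν * l ^ 2 / 2 * (l * c) * (1 - l * c)⁻¹ := by
    simpa only [fun i => (hasSum_integral_expTail_mul_max (hintq i) hl (hsummable i)).tsum_eq]
      using sum_tsum_posPart_moment_term_le hq hl hc.le hlc
  refine (measureReal_sum_sub_integral_ge_le hmeas hindep
    (fun i => integrable_exp_mul_of_summable_posPart_moments (hint1 i) (hint2 i) (hintq i) hl
      (hsummable i)) hl _).trans (exp_le_exp.2 ?_)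
  have hden : 0 < 1 - l * c := by linarith
  calc -l * (√(2 * ν * t) + c * t) + ∑ i, (cgf (X i) P l - l * P[X i])
      ≤ -l * (√(2 * ν * t) + c * t)
        + ∑ i, (l ^ 2 / 2 * ∫ ω, X i ω ^ 2 ∂P + ∫ ω, expTail (l * max (X i ω) 0) ∂P) := by
        gcongr with i
        linarith [cgf_le_of_summable_posPart_moments (hint1 i) (hint2 i) (hintq i) hl (hsummable i)]
    _ ≤ -l * (√(2 * ν * t) + c * t)
        + (l ^ 2 / 2 * ν + ν * l ^ 2 / 2 * (l * c) * (1 - l * c)⁻¹) := by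
        rw [Finset.sum_add_distrib, ← Finset.mul_sum]
        gcongr
    _ = -t := by
        rw [← hopt]
        field_simp
        ring
end
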